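/- For n ≥ 1 and 0 ≤ q < 1, the quotient of A(S^{2n+1}_q) by its commutator ideal I_n is isomorphic as a *-algebra to the Laurent polynomial *-algebra ℂ[u, u⁻¹] (polynomial functions on the circle), via an isomorphism sending u to the class [z₀]. -/

import Mathlib

noncomputable section

namespace QAlg

/-- Generators of a free *-algebra: `inl i` is the generator `z i`, and
`inr i` is its formal adjoint `(z i)*`. -/
abbrev Gen (X : Type) := X ⊕ X

/-- The free algebra on the doubled generating set, realized as the monoid
algebra of the free monoid. -/
abbrev F (X : Type) := MonoidAlgebra ℂ (FreeMonoid (Gen X))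

/-- The *-operation on words: reverse the word and exchange the two copies
of the generators. -/
def wordStar {X : Type} (w : FreeMonoid (Gen X)) : FreeMonoid (Gen X) :=
  FreeMonoid.ofList (((FreeMonoid.toList w).map Sum.swap).reverse)

lemma wordStar_mul {X : Type} (w v : FreeMonoid (Gen X)) :
    wordStar (w * v) = wordStar v * wordStar w := by
  simp [wordStar, FreeMonoid.toList_mul, FreeMonoid.ofList_append]

lemma wordStar_wordStar {X : Type} (w : FreeMonoid (Gen X)) : wordStar (wordStar w) = w := by
  simp [wordStar, List.map_reverse, List.map_map, Sum.swap_swap_eq]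

/-- The canonical conjugate-linear antimultiplicative involution on the free
algebra `F X`, determined by `star (z i) = (z i)*` and complex conjugation
on scalars. -/
def starF {X : Type} (f : F X) : F X :=
  Finsupp.sum f.coeff fun w c => MonoidAlgebra.single (wordStar w) ((starRingEnd ℂ) c)

lemma starF_single {X : Type} (w : FreeMonoid (Gen X)) (c : ℂ) :
    starF (MonoidAlgebra.single w c) = MonoidAlgebra.single (wordStar w) ((starRingEnd ℂ) c) := by
  classical
  unfold starF
  rw [MonoidAlgebra.coeff_single]
  refine Finsupp.sum_single_index ?_
  simp

lemma starF_zero {X : Type} : starF (0 : F X) = 0 := by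
  unfold starF
  rw [MonoidAlgebra.coeff_zero]
  exact Finsupp.sum_zero_index

lemma starF_add {X : Type} (f g : F X) : starF (f + g) = starF f + starF g := by
  classical
  unfold starF
  rw [MonoidAlgebra.coeff_add]
  refine Finsupp.sum_add_index' (fun w => by simp) (fun w c₁ c₂ => by
    simp [map_add, MonoidAlgebra.single_add])

lemma starF_single_mul {X : Type} (w : FreeMonoid (Gen X)) (c : ℂ) (g : F X) :
    starF (MonoidAlgebra.single w c * g) = starF g * starF (MonoidAlgebra.single w c) := by
  classical
  induction g using MonoidAlgebra.induction with
  | zero => simp [starF_zero]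
  | single_add v d g _ _ ihg =>
    rw [mul_add, starF_add, starF_add, add_mul, ihg]
    congr 1
    rw [MonoidAlgebra.single_mul_single, starF_single, starF_single, starF_single,
      MonoidAlgebra.single_mul_single, wordStar_mul, map_mul, mul_comm]

lemma starF_mul {X : Type} (f g : F X) : starF (f * g) = starF g * starF f := by
  classical
  induction f using MonoidAlgebra.induction with
  | zero => simp [starF_zero]
  | single_add w c f _ _ ih =>
    rw [add_mul, starF_add, starF_add, ih, mul_add, starF_single_mul]

lemma starF_starF {X : Type} (f : F X) : starF (starF f) = f := by
  classical
  induction f using MonoidAlgebra.induction with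
  | zero => simp [starF_zero]
  | single_add w c f _ _ ih =>
    rw [starF_add, starF_add, ih, starF_single, starF_single, wordStar_wordStar,
      Complex.conj_conj]

/-- The free *-algebra structure on `F X`. -/
def starRingF (X : Type) : StarRing (F X) where
  star := starF
  star_involutive := starF_starF
  star_mul := starF_mul
  star_add := starF_add

/-- The generator `z i` inside the free *-algebra. -/
def zF {X : Type} (i : X) : F X := MonoidAlgebra.of ℂ _ (FreeMonoid.of (Sum.inl i))

/-- The formal adjoint `(z i)*` inside the free *-algebra. -/
def zsF {X : Type} (i : X) : F X := MonoidAlgebra.of ℂ _ (FreeMonoid.of (Sum.inr i))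

/-- The defining relations of the Vaksman-Soibelman quantum sphere
`S^{2n+1}_q` (with `zsF i` playing the role of `(z i)*`), together with their
images under the *-operation, so that the quotient below is the universal
unital *-algebra on the generators `z 0, ..., z n` with these relations. -/
inductive srel (n : ℕ) (q : ℝ) : F (Fin (n + 1)) → F (Fin (n + 1)) → Prop
  | comm_zz {i j : Fin (n + 1)} (h : i < j) :
      srel n q (zF j * zF i) ((q : ℂ) • (zF i * zF j))
  | comm_zsz {i j : Fin (n + 1)} (h : i ≠ j) :
      srel n q (zsF i * zF j) ((q : ℂ) • (zF j * zsF i))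
  | ccr (i : Fin (n + 1)) :
      srel n q (zsF i * zF i)
        (zF i * zsF i + ((1 - q ^ 2 : ℝ) : ℂ) • ∑ j ∈ Finset.Ioi i, zF j * zsF j)
  | sphere_eq : srel n q (∑ j, zF j * zsF j) 1
  | star_rel {a b} : srel n q a b → srel n q (starF a) (starF b)

/-- The coordinate *-algebra `A(S^{2n+1}_q)` of the quantum sphere. -/
abbrev Sphere (n : ℕ) (q : ℝ) := RingQuot (srel n q)

noncomputable instance (n : ℕ) (q : ℝ) : StarRing (Sphere n q) :=
  @RingQuot.starRing _ _ (starRingF _) (srel n q) (fun _ _ h => srel.star_rel h)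

/-- The generator `z i` of the quantum sphere algebra. -/
def z (n : ℕ) (q : ℝ) (i : Fin (n + 1)) : Sphere n q :=
  RingQuot.mkAlgHom ℂ (srel n q) (zF i)

/-- The commutator ideal of a ring: the two-sided ideal generated by all
commutators `a * b - b * a`.  For a *-algebra this coincides with the
two-sided *-ideal generated by the commutators, since the star of a
commutator is again a commutator. -/
def commutatorIdeal (A : Type) [Ring A] : TwoSidedIdeal A :=
  TwoSidedIdeal.span {x | ∃ a b : A, x = a * b - b * a}

end QAlg

end

noncomputable section

namespace QAlg

/-- The Laurent polynomial algebra `ℂ[u, u⁻¹]`, realized as the group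
algebra of `ℤ` over `ℂ`. -/
abbrev L := AddMonoidAlgebra ℂ ℤ

/-- The monomial `u^j` in `ℂ[u, u⁻¹]`. -/
def u (j : ℤ) : L := AddMonoidAlgebra.single j 1

/-- The *-involution of `ℂ[u, u⁻¹]`, determined by `u* = u⁻¹` and complex
conjugation on coefficients: `(Σ aₖ u^k)* = Σ conj(aₖ) u^(-k)`. -/
def starL (f : L) : L :=
  Finsupp.sum f.coeff fun k c => AddMonoidAlgebra.single (-k) ((starRingEnd ℂ) c)

/-!
In a commutative quotient the relations of `A(S^{2n+1}_q)` collapse: `z_i* z_j = q z_j z_i*`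
becomes `(1 - q) z_j z_i* = 0`, and the relation for `z_0* z_0` becomes
`(1 - q²) Σ_{j>0} z_j z_j* = 0`. As `q² ≠ 1`, the sphere equation then says `z_0 z_0* = 1`, so
`z_0` is unitary and `z_i = z_i z_0* z_0 = 0` for `i ≠ 0`. Hence the quotient is generated by a
unitary and receives a map from `ℂ[u, u⁻¹]`; its inverse comes from the *-homomorphism
`A(S^{2n+1}_q) → ℂ[u, u⁻¹]` with `z_0 ↦ u` and `z_i ↦ 0` for `i ≠ 0`.
-/

section CommQuotient

variable {R A B : Type} [CommSemiring R] [Ring A] [Algebra R A] [CommRing B] [Algebra R B]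

variable (A) in
abbrev CommQuotient : Type := (commutatorIdeal A).ringCon.Quotient

theorem commutatorIdeal_rel_mul_comm (a b : A) :
    (commutatorIdeal A).ringCon (a * b) (b * a) :=
  (TwoSidedIdeal.rel_iff _ _ _).mpr (TwoSidedIdeal.subset_span ⟨a, b, rfl⟩)

variable (A) in
instance : CommRing (CommQuotient A) where
  mul_comm x y := by
    induction x using Quotient.inductionOn'
    induction y using Quotient.inductionOn'
    exact Quotient.sound' (commutatorIdeal_rel_mul_comm _ _)

theorem commutatorIdeal_le_ker (f : A →+* B) : commutatorIdeal A ≤ TwoSidedIdeal.ker f :=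
  TwoSidedIdeal.span_le.mpr <| by
    rintro _ ⟨a, b, rfl⟩
    rw [SetLike.mem_coe, TwoSidedIdeal.mem_ker, map_sub, map_mul, map_mul, mul_comm, sub_self]

def CommQuotient.liftₐ (f : A →ₐ[R] B) : CommQuotient A →ₐ[R] B :=
  (commutatorIdeal A).ringCon.liftₐ f
    (TwoSidedIdeal.ringCon_le_iff.mp (commutatorIdeal_le_ker f.toRingHom))

end CommQuotient

def starLRingHom : L →+* L :=
  (LaurentPolynomial.invert : L ≃ₐ[ℂ] L).toRingHom.comp
    (AddMonoidAlgebra.mapRingHom ℤ (starRingEnd ℂ))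

theorem starLRingHom_single (k : ℤ) (c : ℂ) :
    starLRingHom (.single k c) = .single (-k) (starRingEnd ℂ c) := by
  simp only [starLRingHom, RingHom.comp_apply, AddMonoidAlgebra.mapRingHom_single]
  exact AddMonoidAlgebra.domCongr_single (R := ℂ) _ _ _

theorem starL_eq_starLRingHom (f : L) : starL f = starLRingHom f := by
  induction f using AddMonoidAlgebra.induction with
  | zero => simp [starL]
  | single_add k c f _ _ ih =>
    rw [map_add, ← ih, starLRingHom_single, starL, starL, AddMonoidAlgebra.coeff_add,
      Finsupp.sum_add_index' (by simp) (by simp [AddMonoidAlgebra.single_add]),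
      AddMonoidAlgebra.coeff_single, Finsupp.sum_single_index (by simp)]

theorem starLRingHom_u (k : ℤ) : starLRingHom (u k) = u (-k) := by
  rw [u, starLRingHom_single, map_one, u]

theorem starLRingHom_smul (c : ℂ) (f : L) :
    starLRingHom (c • f) = starRingEnd ℂ c • starLRingHom f := by
  rw [Algebra.smul_def, Algebra.smul_def, map_mul]
  congr 1
  exact starLRingHom_single 0 c

section SphereRelations

variable {n : ℕ} {q : ℝ}

theorem starF_zF (i : Fin (n + 1)) : starF (zF i) = zsF i := by
  rw [zF, MonoidAlgebra.of_apply, starF_single, map_one]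
  rfl

theorem star_mkAlgHom (f : F (Fin (n + 1))) :
    star (RingQuot.mkAlgHom ℂ (srel n q) f) = RingQuot.mkAlgHom ℂ (srel n q) (starF f) := by
  rw [RingQuot.mkAlgHom, AlgHom.coe_mk, RingQuot.mkRingHom_def]
  rfl

theorem mkAlgHom_zF (i : Fin (n + 1)) : RingQuot.mkAlgHom ℂ (srel n q) (zF i) = z n q i := rfl

theorem star_z (i : Fin (n + 1)) : star (z n q i) = RingQuot.mkAlgHom ℂ (srel n q) (zsF i) := by
  rw [z, star_mkAlgHom, starF_zF]

theorem star_z_mul_z {i j : Fin (n + 1)} (h : i ≠ j) :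
    star (z n q i) * z n q j = (q : ℂ) • (z n q j * star (z n q i)) := by
  simpa only [map_mul, map_smul, ← star_z, mkAlgHom_zF] using
    RingQuot.mkAlgHom_rel ℂ (srel.comm_zsz (q := q) h)

theorem star_z_mul_z_self (i : Fin (n + 1)) :
    star (z n q i) * z n q i = z n q i * star (z n q i) +
      ((1 - q ^ 2 : ℝ) : ℂ) • ∑ j ∈ Finset.Ioi i, z n q j * star (z n q j) := by
  simpa only [map_mul, map_add, map_smul, map_sum, ← star_z, mkAlgHom_zF] using
    RingQuot.mkAlgHom_rel ℂ (srel.ccr (q := q) i)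

theorem sum_z_mul_star_z : ∑ j, z n q j * star (z n q j) = 1 := by
  simpa only [map_sum, map_mul, map_one, ← star_z, mkAlgHom_zF] using
    RingQuot.mkAlgHom_rel ℂ (srel.sphere_eq (n := n) (q := q))

theorem Sphere.algHom_ext {B : Type} [Semiring B] [Algebra ℂ B] {f g : Sphere n q →ₐ[ℂ] B}
    (h : ∀ i, f (z n q i) = g (z n q i)) (hs : ∀ i, f (star (z n q i)) = g (star (z n q i))) :
    f = g := by
  refine RingQuot.ringQuot_ext' _ _ _ (MonoidAlgebra.algHom_ext' (FreeMonoid.hom_eq ?_)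
    (Subsingleton.elim _ _))
  rintro (i | i)
  · exact h i
  · have h' := hs i
    rw [star_z] at h'
    exact h'

end SphereRelations

section CommutativeImage

theorem ne_of_sq_ne_one {q : ℝ} (hq : q ^ 2 ≠ 1) : q ≠ 1 := by
  rintro rfl
  exact hq (one_pow 2)

variable {n : ℕ} {q : ℝ} {B : Type} [CommRing B] [Algebra ℂ B] (f : Sphere n q →ₐ[ℂ] B)

theorem map_z_mul_map_star_z_eq_zero (hq : q ≠ 1) {i j : Fin (n + 1)} (h : i ≠ j) :
    f (z n q j) * f (star (z n q i)) = 0 := by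
  have hrel := congrArg f (star_z_mul_z (q := q) h)
  rw [map_mul, map_smul, map_mul, mul_comm] at hrel
  have hq' : (1 - q : ℂ) ≠ 0 := sub_ne_zero.mpr (mod_cast hq.symm)
  refine (smul_eq_zero.mp ?_).resolve_left hq'
  rw [sub_smul, one_smul, ← hrel, sub_self]

theorem sum_Ioi_map_z_mul_map_star_z_eq_zero (hq : q ^ 2 ≠ 1) (i : Fin (n + 1)) :
    ∑ j ∈ Finset.Ioi i, f (z n q j) * f (star (z n q j)) = 0 := by
  have hrel := congrArg f (star_z_mul_z_self (q := q) i)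
  rw [map_mul, map_add, map_smul, map_mul, map_sum, mul_comm, left_eq_add] at hrel
  simp only [map_mul] at hrel
  have hq' : ((1 - q ^ 2 : ℝ) : ℂ) ≠ 0 := mod_cast sub_ne_zero.mpr hq.symm
  exact (smul_eq_zero.mp hrel).resolve_left hq'

theorem map_z_zero_mul_map_star_z_zero (hq : q ^ 2 ≠ 1) :
    f (z n q 0) * f (star (z n q 0)) = 1 := by
  have hsum := congrArg f (sum_z_mul_star_z (n := n) (q := q))
  rw [map_sum, map_one, ← Finset.Ici_bot, ← Finset.add_sum_Ioi_eq_sum_Ici] at hsum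
  simpa only [map_mul, bot_eq_zero, sum_Ioi_map_z_mul_map_star_z_eq_zero f hq, add_zero] using hsum

theorem map_z_eq_zero (hq : q ^ 2 ≠ 1) {i : Fin (n + 1)} (hi : i ≠ 0) : f (z n q i) = 0 :=
  calc f (z n q i) = f (z n q i) * f (star (z n q 0)) * f (z n q 0) := by
        rw [mul_assoc, mul_comm (f (star _)), map_z_zero_mul_map_star_z_zero f hq, mul_one]
    _ = 0 := by rw [map_z_mul_map_star_z_eq_zero f (ne_of_sq_ne_one hq) hi.symm, zero_mul]

theorem map_star_z_eq_zero (hq : q ^ 2 ≠ 1) {i : Fin (n + 1)} (hi : i ≠ 0) :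
    f (star (z n q i)) = 0 :=
  calc f (star (z n q i)) = f (z n q 0) * f (star (z n q i)) * f (star (z n q 0)) := by
        rw [mul_right_comm, map_z_zero_mul_map_star_z_zero f hq, one_mul]
    _ = 0 := by rw [map_z_mul_map_star_z_eq_zero f (ne_of_sq_ne_one hq) hi, zero_mul]

def unitOfMapZ (hq : q ^ 2 ≠ 1) : Bˣ where
  val := f (z n q 0)
  inv := f (star (z n q 0))
  val_inv := map_z_zero_mul_map_star_z_zero f hq
  inv_val := by rw [mul_comm]; exact map_z_zero_mul_map_star_z_zero f hq

end CommutativeImage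

section LaurentLift

variable {B : Type} [Semiring B] [Algebra ℂ B]

def laurentLift (w : Bˣ) : L →ₐ[ℂ] B :=
  AddMonoidAlgebra.lift ℂ B ℤ ((Units.coeHom B).comp (zpowersHom Bˣ w))

theorem laurentLift_u (w : Bˣ) (k : ℤ) : laurentLift w (u k) = ↑(w ^ k) := by
  rw [laurentLift, u, AddMonoidAlgebra.lift_single, one_smul]
  rfl

theorem laurent_algHom_ext {f g : L →ₐ[ℂ] B} (h : f (u 1) = g (u 1)) : f = g :=
  AddMonoidAlgebra.algHom_ext' (MonoidHom.ext_mint h) (Subsingleton.elim _ _)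

end LaurentLift

section ToLaurent

variable (n : ℕ)

def laurentGen : Gen (Fin (n + 1)) → L
  | .inl i => if i = 0 then u 1 else 0
  | .inr i => if i = 0 then u (-1) else 0

def freeToLaurent : F (Fin (n + 1)) →ₐ[ℂ] L :=
  MonoidAlgebra.lift ℂ L _ (FreeMonoid.lift (laurentGen n))

variable {n}

theorem freeToLaurent_zF (i : Fin (n + 1)) :
    freeToLaurent n (zF i) = if i = 0 then u 1 else 0 :=
  MonoidAlgebra.lift_of _ _

theorem freeToLaurent_zsF (i : Fin (n + 1)) :
    freeToLaurent n (zsF i) = if i = 0 then u (-1) else 0 :=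
  MonoidAlgebra.lift_of _ _

theorem laurentGen_swap (x : Gen (Fin (n + 1))) :
    laurentGen n x.swap = starLRingHom (laurentGen n x) := by
  rcases x with i | i <;> by_cases hi : i = 0 <;> simp [laurentGen, hi, starLRingHom_u]

theorem freeMonoidLift_wordStar (w : FreeMonoid (Gen (Fin (n + 1)))) :
    FreeMonoid.lift (laurentGen n) (wordStar w) =
      starLRingHom (FreeMonoid.lift (laurentGen n) w) := by
  induction w using FreeMonoid.recOn with
  | one => exact (map_one starLRingHom).symm
  | of_mul x w ih =>
    rw [wordStar_mul, map_mul, map_mul, map_mul, ih, mul_comm]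
    congr 1
    exact laurentGen_swap x

theorem freeToLaurent_starF (f : F (Fin (n + 1))) :
    freeToLaurent n (starF f) = starLRingHom (freeToLaurent n f) := by
  induction f using MonoidAlgebra.induction with
  | zero => simp only [starF_zero, map_zero]
  | single_add w c f _ _ ih =>
    rw [starF_add, map_add, map_add, map_add, ih, starF_single, freeToLaurent,
      MonoidAlgebra.lift_single, MonoidAlgebra.lift_single, starLRingHom_smul,
      freeMonoidLift_wordStar]

theorem freeToLaurent_rel {q : ℝ} ⦃a b : F (Fin (n + 1))⦄ (h : srel n q a b) :
    freeToLaurent n a = freeToLaurent n b := by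
  induction h with
  | @comm_zz i j h =>
    rw [map_mul, map_smul, map_mul, freeToLaurent_zF j, if_neg (Fin.ne_zero_of_lt h), mul_zero,
      zero_mul, smul_zero]
  | @comm_zsz i j h =>
    have hzero : freeToLaurent n (zF j) * freeToLaurent n (zsF i) = 0 := by
      rw [freeToLaurent_zF, freeToLaurent_zsF]
      split_ifs <;> simp_all
    rw [map_mul, map_smul, map_mul, mul_comm, hzero, smul_zero]
  | ccr i =>
    have hsum : freeToLaurent n (∑ j ∈ Finset.Ioi i, zF j * zsF j) = 0 := by
      refine (map_sum _ _ _).trans (Finset.sum_eq_zero fun j hj => ?_)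
      rw [map_mul, freeToLaurent_zF, if_neg (Fin.ne_zero_of_lt (Finset.mem_Ioi.mp hj)), zero_mul]
    rw [map_add, map_smul, hsum, smul_zero, add_zero, map_mul, map_mul, mul_comm]
  | sphere_eq =>
    have hterm (j : Fin (n + 1)) (hj : j ≠ 0) : freeToLaurent n (zF j * zsF j) = 0 := by
      rw [map_mul, freeToLaurent_zF, if_neg hj, zero_mul]
    rw [map_sum, Finset.sum_eq_single_of_mem 0 (Finset.mem_univ _) fun j _ => hterm j, map_mul,
      freeToLaurent_zF, freeToLaurent_zsF, if_pos rfl, if_pos rfl, u, u,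
      AddMonoidAlgebra.single_mul_single]
    simp
  | star_rel _ ih => rw [freeToLaurent_starF, freeToLaurent_starF, ih]

variable (n) in
def toLaurent (q : ℝ) : Sphere n q →ₐ[ℂ] L :=
  RingQuot.liftAlgHom ℂ ⟨freeToLaurent n, freeToLaurent_rel⟩

variable {q : ℝ}

theorem toLaurent_z (i : Fin (n + 1)) : toLaurent n q (z n q i) = if i = 0 then u 1 else 0 :=
  (RingQuot.liftAlgHom_mkAlgHom_apply _ _ _ _).trans (freeToLaurent_zF i)

theorem toLaurent_star (a : Sphere n q) :
    toLaurent n q (star a) = starLRingHom (toLaurent n q a) := by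
  obtain ⟨f, rfl⟩ := RingQuot.mkAlgHom_surjective ℂ (srel n q) a
  rw [star_mkAlgHom, toLaurent, RingQuot.liftAlgHom_mkAlgHom_apply,
    RingQuot.liftAlgHom_mkAlgHom_apply, freeToLaurent_starF]

end ToLaurent

section LaurentEquiv

variable {n : ℕ} {q : ℝ}

variable (n) in
def ofLaurent (hq : q ^ 2 ≠ 1) : L →ₐ[ℂ] CommQuotient (Sphere n q) :=
  laurentLift (unitOfMapZ ((commutatorIdeal (Sphere n q)).ringCon.mkₐ ℂ) hq)

theorem ofLaurent_u_one (hq : q ^ 2 ≠ 1) :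
    ofLaurent n hq (u 1) = (commutatorIdeal (Sphere n q)).ringCon.mk' (z n q 0) := by
  rw [ofLaurent, laurentLift_u, zpow_one]
  rfl

theorem ofLaurent_u_neg_one (hq : q ^ 2 ≠ 1) :
    ofLaurent n hq (u (-1)) = (commutatorIdeal (Sphere n q)).ringCon.mk' (star (z n q 0)) := by
  rw [ofLaurent, laurentLift_u, zpow_neg_one]
  rfl

theorem toLaurent_comp_ofLaurent (hq : q ^ 2 ≠ 1) :
    (CommQuotient.liftₐ (toLaurent n q)).comp (ofLaurent n hq) = AlgHom.id ℂ L :=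
  laurent_algHom_ext <| by
    rw [AlgHom.comp_apply, ofLaurent_u_one, AlgHom.id_apply]
    exact (toLaurent_z 0).trans (if_pos rfl)

theorem ofLaurent_comp_toLaurent (hq : q ^ 2 ≠ 1) :
    (ofLaurent n hq).comp (CommQuotient.liftₐ (toLaurent n q)) =
      AlgHom.id ℂ (CommQuotient (Sphere n q)) := by
  set mk := (commutatorIdeal (Sphere n q)).ringCon.mkₐ ℂ
  refine RingCon.Quotient.hom_extₐ (Sphere.algHom_ext (fun i => ?_) (fun i => ?_))
  · show ofLaurent n hq (toLaurent n q (z n q i)) = mk (z n q i)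
    rw [toLaurent_z]
    split_ifs with hi
    · subst hi
      exact ofLaurent_u_one hq
    · exact (map_zero _).trans (map_z_eq_zero mk hq hi).symm
  · show ofLaurent n hq (toLaurent n q (star (z n q i))) = mk (star (z n q i))
    rw [toLaurent_star, toLaurent_z]
    split_ifs with hi
    · subst hi
      rw [starLRingHom_u]
      exact ofLaurent_u_neg_one hq
    · rw [map_zero, map_zero]
      exact (map_star_z_eq_zero mk hq hi).symm

variable (n) in
def commQuotientSphereEquivLaurent (hq : q ^ 2 ≠ 1) : CommQuotient (Sphere n q) ≃ₐ[ℂ] L :=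
  AlgEquiv.ofAlgHom _ _ (toLaurent_comp_ofLaurent hq) (ofLaurent_comp_toLaurent hq)

end LaurentEquiv

theorem sphere_quotient_commutatorIdeal_iso_laurent_general (n : ℕ)
    (q : ℝ) (hq0 : 0 ≤ q) (hq1 : q < 1) :
    ∃ eqv : (commutatorIdeal (Sphere n q)).ringCon.Quotient ≃+* L,
      (∀ c : ℂ,
        eqv ((commutatorIdeal (Sphere n q)).ringCon.mk' (algebraMap ℂ (Sphere n q) c)) =
          algebraMap ℂ L c) ∧
      (∀ a : Sphere n q,
        eqv ((commutatorIdeal (Sphere n q)).ringCon.mk' (star a)) =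
          starL (eqv ((commutatorIdeal (Sphere n q)).ringCon.mk' a))) ∧
      eqv.symm (u 1) = (commutatorIdeal (Sphere n q)).ringCon.mk' (z n q 0) := by
  have hq : q ^ 2 ≠ 1 := (by nlinarith : q ^ 2 < 1).ne
  let e := commQuotientSphereEquivLaurent n hq
  refine ⟨e.toRingEquiv, e.commutes, fun a => ?_, ofLaurent_u_one (n := n) hq⟩
  exact (toLaurent_star a).trans (starL_eq_starLRingHom _).symm

/-- For `n ≥ 1` and `0 ≤ q < 1`, the quotient of `A(S^{2n+1}_q)` by its
commutator ideal is *-isomorphic to the Laurent polynomial *-algebra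
`ℂ[u, u⁻¹]`, via an isomorphism sending `u` to the class `[z 0]`. -/
theorem sphere_quotient_commutatorIdeal_iso_laurent (n : ℕ) (hn : 1 ≤ n)
    (q : ℝ) (hq0 : 0 ≤ q) (hq1 : q < 1) :
    ∃ eqv : (commutatorIdeal (Sphere n q)).ringCon.Quotient ≃+* L,
      (∀ c : ℂ,
        eqv ((commutatorIdeal (Sphere n q)).ringCon.mk' (algebraMap ℂ (Sphere n q) c)) =
          algebraMap ℂ L c) ∧
      (∀ a : Sphere n q,
        eqv ((commutatorIdeal (Sphere n q)).ringCon.mk' (star a)) =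
          starL (eqv ((commutatorIdeal (Sphere n q)).ringCon.mk' a))) ∧
      eqv.symm (u 1) = (commutatorIdeal (Sphere n q)).ringCon.mk' (z n q 0) :=
  sphere_quotient_commutatorIdeal_iso_laurent_general n q hq0 hq1

end QAlg
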